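/- arXiv:2402.09789 — 4 statements merged into one kernel-verified Lean document; each statement's English description precedes it below -/
import Mathlib

section
/- Under Assumption 1, for any fixed (E,T), if (Q̂,q̂) is the unique solution of the rational-inattention problem, P is its generated SDSC function, and a ∈ A is an alternative chosen with probability 1 at the posterior γ^a ∈ supp Q̂ (so P(a) > 0), then the optimal posterior is recovered from the SDSC data by Bayes' rule: γ^a(ω) = P(a|ω)μ(ω)/P(a) for every ω ∈ Ω. -/
open scoped BigOperators ENNReal

noncomputable section

/-- A feasible posterior-based policy `(Q, q) ∈ Λ`: a finitely supported
Bayes-consistent attention allocation `Q` over posteriors in the simplex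
`Δ(Ω)`, together with a stochastic choice function `q` mapping each supported
posterior to a probability distribution over alternatives. -/
structure Policy (Ω A : Type*) [Fintype Ω] [Fintype A] (μ : Ω → ℝ) where
  supp : Finset (Ω → ℝ)
  Q : (Ω → ℝ) → ℝ
  Q_nonneg : ∀ γ, 0 ≤ Q γ
  supp_iff : ∀ γ, γ ∈ supp ↔ Q γ ≠ 0
  mem_simplex : ∀ γ ∈ supp, γ ∈ stdSimplex ℝ Ω
  Q_total : ∑ γ ∈ supp, Q γ = 1
  bayes : ∀ ω, ∑ γ ∈ supp, Q γ * γ ω = μ ω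
  q : (Ω → ℝ) → A → ℝ
  q_mem : ∀ γ ∈ supp, q γ ∈ stdSimplex ℝ A

variable {Ω A : Type*} [Fintype Ω] [Fintype A]

/-- Expected value `γ ⬝ v` of a vector `v : ℝ^Ω` under a belief `γ`. -/
def dotR (γ v : Ω → ℝ) : ℝ := ∑ ω, γ ω * v ω

/-- Net expected utility `N^a(γ) = γ·u_a + E(a) − T(γ)` of alternative `a`
at posterior `γ`, valued in the extended reals (`E` takes values in
`ℝ ∪ {−∞}` and `T` in `[0, ∞]`). -/
def Na (u : A → Ω → ℝ) (E : A → EReal) (T : (Ω → ℝ) → EReal) (a : A) (γ : Ω → ℝ) : EReal :=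
  ((dotR γ (u a) : ℝ) : EReal) + E a - T γ

/-- Value of a posterior: `N(γ) = max_a N^a(γ)`. -/
def Nval (u : A → Ω → ℝ) (E : A → EReal) (T : (Ω → ℝ) → EReal) (γ : Ω → ℝ) : EReal :=
  ⨆ a : A, Na u E T a γ

/-- Objective of the rational-inattention problem:
`Σ_{γ ∈ supp Q} Σ_{a ∈ A} Q(γ) q(a|γ) (γ·u_a + E(a) − T(γ))`. -/
def objective (u : A → Ω → ℝ) (E : A → EReal) (T : (Ω → ℝ) → EReal)
    {μ : Ω → ℝ} (π : Policy Ω A μ) : EReal :=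
  ∑ γ ∈ π.supp, ∑ a : A, ((π.Q γ * π.q γ a : ℝ) : EReal) * Na u E T a γ

/-- `π` maximizes the rational-inattention problem over `Λ`. -/
def RIMax (u : A → Ω → ℝ) (E : A → EReal) (T : (Ω → ℝ) → EReal)
    {μ : Ω → ℝ} (π : Policy Ω A μ) : Prop :=
  ∀ π' : Policy Ω A μ, objective u E T π' ≤ objective u E T π

/-- `Γ(θ)`: the set of posteriors maximizing `N(γ) − θ·γ` over the simplex. -/
def Gamma (u : A → Ω → ℝ) (E : A → EReal) (T : (Ω → ℝ) → EReal) (θ : Ω → ℝ) :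
    Set (Ω → ℝ) :=
  {γ | γ ∈ stdSimplex ℝ Ω ∧ ∀ γ' ∈ stdSimplex ℝ Ω,
    Nval u E T γ' - ((dotR γ' θ : ℝ) : EReal) ≤ Nval u E T γ - ((dotR γ θ : ℝ) : EReal)}

/-- Assumption 1 (parts (ii)–(iv)): `E(a) ≠ −∞` for some `a` (and `E` is
`ℝ ∪ {−∞}`-valued); `T ≥ 0` is strictly convex with `T(μ) = 0`; for every
direction `θ` the set `Γ(θ)` is linearly independent; and for distinct
alternatives the utility difference `u_a − u_b` is not constant across states. -/
def Assumption1 (μ : Ω → ℝ) (u : A → Ω → ℝ) (E : A → EReal) (T : (Ω → ℝ) → EReal) : Prop :=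
  (∀ a, E a ≠ ⊤) ∧ (∃ a, E a ≠ ⊥) ∧
  (∀ γ, 0 ≤ T γ) ∧ (T μ = 0) ∧
  (∀ γ₁ ∈ stdSimplex ℝ Ω, ∀ γ₂ ∈ stdSimplex ℝ Ω, γ₁ ≠ γ₂ →
    ∀ t : ℝ, 0 < t → t < 1 →
      T (t • γ₁ + (1 - t) • γ₂) < (t : EReal) * T γ₁ + ((1 - t : ℝ) : EReal) * T γ₂) ∧
  (∀ θ : Ω → ℝ, LinearIndependent ℝ (fun γ : Gamma u E T θ => (γ : Ω → ℝ))) ∧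
  (∀ a b : A, a ≠ b → ¬ ∃ c : ℝ, ∀ ω, u a ω - u b ω = c)

/-- The state-dependent stochastic choice function generated by a policy:
`P(a|ω) = μ(ω)⁻¹ Σ_{γ ∈ supp Q} Q(γ) q(a|γ) γ(ω)`. -/
def genP (μ : Ω → ℝ) (π : Policy Ω A μ) (a : A) (ω : Ω) : ℝ :=
  (μ ω)⁻¹ * ∑ γ ∈ π.supp, π.Q γ * π.q γ a * γ ω

/-- Unconditional choice probability generated by a policy:
`P(a) = Σ_{γ ∈ supp Q} Q(γ) q(a|γ)`. -/
def genProb (μ : Ω → ℝ) (π : Policy Ω A μ) (a : A) : ℝ :=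
  ∑ γ ∈ π.supp, π.Q γ * π.q γ a

/-!
If `a` were also chosen at a second posterior `γ` of the optimal policy, moving the mass with
which `a` is chosen at `γ^a` and at `γ` to their barycentre (weighted by these masses), and
choosing `a` there, keeps the policy Bayes-consistent and strictly raises the objective, since
`N^a(γ) = γ·u_a + E(a) − T(γ)` is strictly concave. So `a` is chosen only at `γ^a`, whence
`P(a) = Q̂(γ^a)` and `P(a|ω) μ(ω) = Q̂(γ^a) γ^a(ω)`. The uninformative policy has finite value
because `T(μ) = 0`, so the optimal value is finite and all comparisons are between reals.
-/

set_option linter.unusedSectionVars false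

open Finset

theorem EReal.coe_finset_sum {ι : Type*} (s : Finset ι) (f : ι → ℝ) :
    ((∑ i ∈ s, f i : ℝ) : EReal) = ∑ i ∈ s, (f i : EReal) :=
  map_sum (⟨⟨Real.toEReal, EReal.coe_zero⟩, EReal.coe_add⟩ : ℝ →+ EReal) f s

def StrictConvexOnSimplex (T : (Ω → ℝ) → EReal) : Prop :=
  ∀ γ₁ ∈ stdSimplex ℝ Ω, ∀ γ₂ ∈ stdSimplex ℝ Ω, γ₁ ≠ γ₂ →
    ∀ t : ℝ, 0 < t → t < 1 →
      T (t • γ₁ + (1 - t) • γ₂) < (t : EReal) * T γ₁ + ((1 - t : ℝ) : EReal) * T γ₂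

theorem dotR_convex_combination (t : ℝ) (γ₁ γ₂ v : Ω → ℝ) :
    dotR (t • γ₁ + (1 - t) • γ₂) v = t * dotR γ₁ v + (1 - t) * dotR γ₂ v := by
  simp only [dotR, Pi.add_apply, Pi.smul_apply, smul_eq_mul, mul_sum, ← sum_add_distrib]
  exact sum_congr rfl fun ω _ => by ring

section NetUtility

variable {u : A → Ω → ℝ} {E : A → EReal} {T : (Ω → ℝ) → EReal}

theorem Na_eq_coe {b : A} {γ : Ω → ℝ} {e τ : ℝ} (he : E b = e) (hτ : T γ = τ) :
    Na u E T b γ = ((dotR γ (u b) + e - τ : ℝ) : EReal) := by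
  rw [Na, he, hτ]
  rfl

theorem Na_ne_top {b : A} {γ : Ω → ℝ} (hE : E b ≠ ⊤) (hT : 0 ≤ T γ) :
    Na u E T b γ ≠ ⊤ := by
  have hT' : -T γ ≠ ⊤ := by
    rw [Ne, EReal.neg_eq_top_iff]
    exact (EReal.bot_lt_zero.trans_le hT).ne'
  exact (EReal.add_lt_top (EReal.add_lt_top (EReal.coe_ne_top _) hE).ne hT').ne

theorem Na_ne_bot_iff {b : A} {γ : Ω → ℝ} (hE : E b ≠ ⊤) (hT : 0 ≤ T γ) :
    Na u E T b γ ≠ ⊥ ↔ E b ≠ ⊥ ∧ T γ ≠ ⊤ := by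
  constructor
  · intro h
    refine ⟨fun hb => h ?_, fun ht => h ?_⟩
    · rw [Na, hb, EReal.add_bot, EReal.bot_sub]
    · rw [Na, ht, EReal.sub_top]
  · rintro ⟨hb, ht⟩
    rw [Na_eq_coe (EReal.coe_toReal hE hb).symm
      (EReal.coe_toReal ht (EReal.bot_lt_zero.trans_le hT).ne').symm]
    exact EReal.coe_ne_bot _

theorem toReal_Na_convex_combination_lt {b : A} (hE : E b ≠ ⊤) (hT : ∀ γ, 0 ≤ T γ)
    (hconv : StrictConvexOnSimplex T) {γ₁ γ₂ : Ω → ℝ} (h₁ : γ₁ ∈ stdSimplex ℝ Ω)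
    (h₂ : γ₂ ∈ stdSimplex ℝ Ω) (hne : γ₁ ≠ γ₂) (hf₁ : Na u E T b γ₁ ≠ ⊥)
    (hf₂ : Na u E T b γ₂ ≠ ⊥) {t : ℝ} (ht₀ : 0 < t) (ht₁ : t < 1) :
    Na u E T b (t • γ₁ + (1 - t) • γ₂) ≠ ⊥ ∧
      t * (Na u E T b γ₁).toReal + (1 - t) * (Na u E T b γ₂).toReal
        < (Na u E T b (t • γ₁ + (1 - t) • γ₂)).toReal := by
  obtain ⟨hEb, hT₁⟩ := (Na_ne_bot_iff hE (hT γ₁)).1 hf₁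
  obtain ⟨-, hT₂⟩ := (Na_ne_bot_iff hE (hT γ₂)).1 hf₂
  set γ := t • γ₁ + (1 - t) • γ₂
  have hlt := hconv γ₁ h₁ γ₂ h₂ hne t ht₀ ht₁
  have hTγ : T γ ≠ ⊤ := ne_top_of_lt hlt
  have hreal : ∀ {x : EReal}, 0 ≤ x → x ≠ ⊤ → x = (x.toReal : EReal) := fun h0 htop =>
    (EReal.coe_toReal htop (EReal.bot_lt_zero.trans_le h0).ne').symm
  rw [hreal (hT γ) hTγ, hreal (hT γ₁) hT₁, hreal (hT γ₂) hT₂, ← EReal.coe_mul,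
    ← EReal.coe_mul, ← EReal.coe_add, EReal.coe_lt_coe_iff] at hlt
  have he := (EReal.coe_toReal hE hEb).symm
  rw [Na_eq_coe he (hreal (hT γ) hTγ), Na_eq_coe he (hreal (hT γ₁) hT₁),
    Na_eq_coe he (hreal (hT γ₂) hT₂)]
  simp only [EReal.toReal_coe, dotR_convex_combination, γ]
  exact ⟨EReal.coe_ne_bot _, by nlinarith⟩

theorem sum_sum_coe_mul_Na_eq_coe (hE : ∀ b, E b ≠ ⊤) (hT : ∀ γ, 0 ≤ T γ)
    (S : Finset (Ω → ℝ)) {w : (Ω → ℝ) → A → ℝ}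
    (hw : ∀ γ ∈ S, ∀ b, w γ b ≠ 0 → Na u E T b γ ≠ ⊥) :
    ∑ γ ∈ S, ∑ b, (w γ b : EReal) * Na u E T b γ
      = ((∑ γ ∈ S, ∑ b, w γ b * (Na u E T b γ).toReal : ℝ) : EReal) := by
  rw [EReal.coe_finset_sum]
  refine sum_congr rfl fun γ hγ => ?_
  rw [EReal.coe_finset_sum]
  refine sum_congr rfl fun b _ => ?_
  by_cases h : w γ b = 0
  · simp [h]
  · rw [EReal.coe_mul, EReal.coe_toReal (Na_ne_top (hE b) (hT γ)) (hw γ hγ b h)]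

end NetUtility

section Pooling

variable (w : (Ω → ℝ) → A → ℝ) (a : A) (γ₁ γ₂ γ : Ω → ℝ)

open Classical in
/-- The joint weights obtained from `w` by moving the `a`-weight of `γ₁` and of `γ₂` to `γ`. -/
def pooledWeight (γ' : Ω → ℝ) (b : A) : ℝ :=
  w γ' b + if b = a then
    ((if γ' = γ then w γ₁ a + w γ₂ a else 0) - (if γ' = γ₁ then w γ₁ a else 0)
      - if γ' = γ₂ then w γ₂ a else 0)
  else 0

theorem sum_sum_pooledWeight_mul {S : Finset (Ω → ℝ)} (h₁ : γ₁ ∈ S) (h₂ : γ₂ ∈ S) (h : γ ∈ S)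
    (g : (Ω → ℝ) → A → ℝ) :
    ∑ γ' ∈ S, ∑ b, pooledWeight w a γ₁ γ₂ γ γ' b * g γ' b
      = ∑ γ' ∈ S, ∑ b, w γ' b * g γ' b
        + ((w γ₁ a + w γ₂ a) * g γ a - w γ₁ a * g γ₁ a - w γ₂ a * g γ₂ a) := by
  classical
  simp [pooledWeight, add_mul, sum_add_distrib, ite_mul, sub_mul, sum_sub_distrib, h₁, h₂, h]

variable {w a γ₁ γ₂ γ}

theorem pooledWeight_nonneg (hw : ∀ γ' b, 0 ≤ w γ' b) (h₁₂ : γ₁ ≠ γ₂) (hγ₁ : γ ≠ γ₁)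
    (hγ₂ : γ ≠ γ₂) (γ' : Ω → ℝ) (b : A) : 0 ≤ pooledWeight w a γ₁ γ₂ γ γ' b := by
  unfold pooledWeight
  by_cases hb : b = a
  · subst hb
    by_cases h : γ' = γ
    · simp [h, hγ₁, hγ₂, add_nonneg, hw]
    by_cases h₁ : γ' = γ₁
    · subst h₁
      simp [hγ₁.symm, h₁₂]
    by_cases h₂ : γ' = γ₂
    · subst h₂
      simp [hγ₂.symm, h₁₂.symm]
    · simp [h, h₁, h₂, hw]
  · simp [hb, hw]

theorem pooledWeight_le (hw : ∀ γ' b, 0 ≤ w γ' b) {γ' : Ω → ℝ} {b : A}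
    (h : ¬(γ' = γ ∧ b = a)) : pooledWeight w a γ₁ γ₂ γ γ' b ≤ w γ' b := by
  have := hw γ₁ a
  have := hw γ₂ a
  unfold pooledWeight
  split_ifs <;> simp_all

theorem ne_zero_of_pooledWeight_ne_zero (hw : ∀ γ' b, 0 ≤ w γ' b) (h₁₂ : γ₁ ≠ γ₂)
    (hγ₁ : γ ≠ γ₁) (hγ₂ : γ ≠ γ₂) {γ' : Ω → ℝ} {b : A}
    (h : pooledWeight w a γ₁ γ₂ γ γ' b ≠ 0) (hc : ¬(γ' = γ ∧ b = a)) : w γ' b ≠ 0 :=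
  (((pooledWeight_nonneg hw h₁₂ hγ₁ hγ₂ γ' b).lt_of_ne' h).trans_le (pooledWeight_le hw hc)).ne'

end Pooling

namespace Policy

variable {μ : Ω → ℝ}

section

variable (π : Policy Ω A μ)

theorem Q_pos {γ : Ω → ℝ} (h : γ ∈ π.supp) : 0 < π.Q γ :=
  (π.Q_nonneg γ).lt_of_ne' ((π.supp_iff γ).1 h)

theorem Q_eq_zero_of_notMem {γ : Ω → ℝ} (h : γ ∉ π.supp) : π.Q γ = 0 :=
  not_not.1 fun h' => h ((π.supp_iff γ).2 h')

theorem mem_supp_of_Q_mul_q_ne_zero {γ : Ω → ℝ} {b : A} (h : π.Q γ * π.q γ b ≠ 0) :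
    γ ∈ π.supp :=
  (π.supp_iff γ).2 (left_ne_zero_of_mul h)

theorem Q_mul_q_nonneg (γ : Ω → ℝ) (b : A) : 0 ≤ π.Q γ * π.q γ b := by
  by_cases h : γ ∈ π.supp
  · exact mul_nonneg (π.Q_nonneg γ) ((π.q_mem γ h).1 b)
  · simp [π.Q_eq_zero_of_notMem h]

theorem sum_sum_Q_mul_q_mul {S : Finset (Ω → ℝ)} (hS : π.supp ⊆ S) (g : (Ω → ℝ) → ℝ) :
    ∑ γ ∈ S, ∑ b, π.Q γ * π.q γ b * g γ = ∑ γ ∈ π.supp, π.Q γ * g γ := by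
  rw [← sum_subset hS fun γ _ h => by simp [π.Q_eq_zero_of_notMem h]]
  refine sum_congr rfl fun γ hγ => ?_
  rw [← sum_mul, ← mul_sum, (π.q_mem γ hγ).2, mul_one]

theorem objective_eq_sum_of_subset (u : A → Ω → ℝ) (E : A → EReal) (T : (Ω → ℝ) → EReal)
    {S : Finset (Ω → ℝ)} (hS : π.supp ⊆ S) :
    objective u E T π = ∑ γ ∈ S, ∑ b, ((π.Q γ * π.q γ b : ℝ) : EReal) * Na u E T b γ :=
  sum_subset hS fun γ _ h => by simp [π.Q_eq_zero_of_notMem h]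

theorem Na_ne_bot_of_objective_ne_bot {u : A → Ω → ℝ} {E : A → EReal}
    {T : (Ω → ℝ) → EReal} (hbot : objective u E T π ≠ ⊥) {γ : Ω → ℝ} {b : A}
    (h : π.Q γ * π.q γ b ≠ 0) : Na u E T b γ ≠ ⊥ := by
  intro hNa
  refine hbot (WithBot.sum_eq_bot_iff.2 ⟨γ, π.mem_supp_of_Q_mul_q_ne_zero h,
    WithBot.sum_eq_bot_iff.2 ⟨b, mem_univ b, ?_⟩⟩)
  rw [hNa]
  exact EReal.coe_mul_bot_of_pos ((π.Q_mul_q_nonneg γ b).lt_of_ne' h)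

end

/-- The policy whose joint weight on the pair (posterior `γ`, alternative `b`) is `w γ b`. -/
def ofWeight (S : Finset (Ω → ℝ)) (w : (Ω → ℝ) → A → ℝ) (hw : ∀ γ b, 0 ≤ w γ b)
    (hS : ∀ γ b, w γ b ≠ 0 → γ ∈ S) (hsimplex : ∀ γ ∈ S, γ ∈ stdSimplex ℝ Ω)
    (htotal : ∑ γ ∈ S, ∑ b, w γ b = 1) (hbayes : ∀ ω, ∑ γ ∈ S, ∑ b, w γ b * γ ω = μ ω) :
    Policy Ω A μ where
  supp := {γ ∈ S | ∑ b, w γ b ≠ 0}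
  Q γ := ∑ b, w γ b
  Q_nonneg γ := sum_nonneg fun b _ => hw γ b
  supp_iff γ := by
    refine ⟨fun h => (mem_filter.1 h).2, fun h => mem_filter.2 ⟨?_, h⟩⟩
    obtain ⟨b, -, hb⟩ := exists_ne_zero_of_sum_ne_zero h
    exact hS γ b hb
  mem_simplex γ hγ := hsimplex γ (mem_filter.1 hγ).1
  Q_total := by rw [sum_filter_ne_zero, htotal]
  bayes ω := by
    rw [sum_filter_of_ne fun γ _ h => left_ne_zero_of_mul h, ← hbayes ω]
    simp only [sum_mul]
  q γ b := w γ b / ∑ b, w γ b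
  q_mem γ hγ :=
    ⟨fun b => div_nonneg (hw γ b) (sum_nonneg fun b _ => hw γ b),
      by rw [← sum_div, div_self (mem_filter.1 hγ).2]⟩

theorem ofWeight_Q_mul_q {S : Finset (Ω → ℝ)} {w : (Ω → ℝ) → A → ℝ} (hw hS hsimplex htotal)
    (hbayes : ∀ ω, ∑ γ ∈ S, ∑ b, w γ b * γ ω = μ ω) (γ : Ω → ℝ) (b : A) :
    (ofWeight S w hw hS hsimplex htotal hbayes).Q γ *
      (ofWeight S w hw hS hsimplex htotal hbayes).q γ b = w γ b := by
  change (∑ b, w γ b) * (w γ b / ∑ b, w γ b) = w γ b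
  by_cases h : ∑ b, w γ b = 0
  · rw [h, zero_mul, eq_comm]
    exact (sum_eq_zero_iff_of_nonneg fun b _ => hw γ b).1 h b (mem_univ b)
  · exact mul_div_cancel₀ _ h

theorem objective_ofWeight (u : A → Ω → ℝ) (E : A → EReal) (T : (Ω → ℝ) → EReal)
    {S : Finset (Ω → ℝ)} {w : (Ω → ℝ) → A → ℝ} (hw hS hsimplex htotal)
    (hbayes : ∀ ω, ∑ γ ∈ S, ∑ b, w γ b * γ ω = μ ω) :
    objective u E T (ofWeight S w hw hS hsimplex htotal hbayes)
      = ∑ γ ∈ S, ∑ b, (w γ b : EReal) * Na u E T b γ := by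
  rw [objective_eq_sum_of_subset _ u E T (filter_subset _ S)]
  simp only [ofWeight_Q_mul_q]

open Classical in
def noInformation (hμ : μ ∈ stdSimplex ℝ Ω) (b : A) : Policy Ω A μ :=
  ofWeight {μ} (fun γ b' => if γ = μ then if b' = b then 1 else 0 else 0)
    (fun _ _ => by split_ifs <;> norm_num) (fun γ b' h => by simp_all)
    (fun γ hγ => by rwa [mem_singleton.1 hγ]) (by simp) (fun ω => by simp)

theorem objective_noInformation (u : A → Ω → ℝ) (E : A → EReal) (T : (Ω → ℝ) → EReal)
    (hμ : μ ∈ stdSimplex ℝ Ω) (b : A) :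
    objective u E T (noInformation hμ b) = Na u E T b μ := by
  classical
  simp [noInformation, objective_ofWeight, apply_ite Real.toEReal]

variable {u : A → Ω → ℝ} {E : A → EReal} {T : (Ω → ℝ) → EReal}

theorem exists_objective_eq_sum_pooledWeight (u : A → Ω → ℝ) (E : A → EReal)
    (T : (Ω → ℝ) → EReal) (π : Policy Ω A μ) {a : A} {γ₁ γ₂ γ : Ω → ℝ} (h₁ : γ₁ ∈ π.supp)
    (h₂ : γ₂ ∈ π.supp) (h₁₂ : γ₁ ≠ γ₂) (hγ : γ ∈ stdSimplex ℝ Ω) (hγ₁ : γ ≠ γ₁)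
    (hγ₂ : γ ≠ γ₂) (hbary : ∀ ω, (π.Q γ₁ * π.q γ₁ a + π.Q γ₂ * π.q γ₂ a) * γ ω
      = π.Q γ₁ * π.q γ₁ a * γ₁ ω + π.Q γ₂ * π.q γ₂ a * γ₂ ω) :
    ∃ π' : Policy Ω A μ, objective u E T π' = ∑ γ' ∈ insert γ π.supp, ∑ b,
      (pooledWeight (fun γ b => π.Q γ * π.q γ b) a γ₁ γ₂ γ γ' b : EReal) * Na u E T b γ' := by
  set w := fun γ b => π.Q γ * π.q γ b
  have hS : π.supp ⊆ insert γ π.supp := subset_insert γ π.supp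
  have hsum := sum_sum_pooledWeight_mul w a γ₁ γ₂ γ (hS h₁) (hS h₂) (mem_insert_self γ π.supp)
  have hmass : ∑ γ' ∈ insert γ π.supp, ∑ b, w γ' b = 1 := by
    simpa [π.Q_total] using π.sum_sum_Q_mul_q_mul hS fun _ => 1
  refine ⟨ofWeight (insert γ π.supp) (pooledWeight w a γ₁ γ₂ γ)
    (pooledWeight_nonneg π.Q_mul_q_nonneg h₁₂ hγ₁ hγ₂) (fun γ' b h => ?_)
    (fun γ' hγ' => (mem_insert.1 hγ').elim (· ▸ hγ) (π.mem_simplex γ'))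
    (by simpa [hmass] using hsum fun _ _ => 1) (fun ω => ?_), objective_ofWeight ..⟩
  · by_cases hc : γ' = γ ∧ b = a
    · exact hc.1 ▸ mem_insert_self γ π.supp
    · exact hS (π.mem_supp_of_Q_mul_q_ne_zero
        (ne_zero_of_pooledWeight_ne_zero π.Q_mul_q_nonneg h₁₂ hγ₁ hγ₂ h hc))
  · rw [hsum fun γ' _ => γ' ω, π.sum_sum_Q_mul_q_mul hS fun γ' => γ' ω, π.bayes ω, hbary]
    ring

theorem exists_objective_gt_of_chosen_at_two (hE : ∀ b, E b ≠ ⊤) (hT : ∀ γ, 0 ≤ T γ)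
    (hconv : StrictConvexOnSimplex T) (π : Policy Ω A μ) (hbot : objective u E T π ≠ ⊥)
    {a : A} {γ₁ γ₂ : Ω → ℝ} (h₁ : γ₁ ∈ π.supp) (h₂ : γ₂ ∈ π.supp) (h₁₂ : γ₁ ≠ γ₂)
    (hq₁ : π.q γ₁ a ≠ 0) (hq₂ : π.q γ₂ a ≠ 0) :
    ∃ π' : Policy Ω A μ, objective u E T π < objective u E T π' := by
  set m₁ := π.Q γ₁ * π.q γ₁ a
  set m₂ := π.Q γ₂ * π.q γ₂ a
  have hm₁ : 0 < m₁ := (π.Q_mul_q_nonneg γ₁ a).lt_of_ne' (mul_ne_zero (π.Q_pos h₁).ne' hq₁)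
  have hm₂ : 0 < m₂ := (π.Q_mul_q_nonneg γ₂ a).lt_of_ne' (mul_ne_zero (π.Q_pos h₂).ne' hq₂)
  set t := m₁ / (m₁ + m₂)
  have ht₀ : 0 < t := by positivity
  have ht₁ : t < 1 := (div_lt_one (by positivity)).2 (by linarith)
  have htm₁ : (m₁ + m₂) * t = m₁ := mul_div_cancel₀ _ (by positivity)
  have hsimplex₁ := π.mem_simplex γ₁ h₁
  have hsimplex₂ := π.mem_simplex γ₂ h₂
  obtain ⟨hfin, hconcave⟩ := toReal_Na_convex_combination_lt (hE a) hT hconv hsimplex₁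
    hsimplex₂ h₁₂ (π.Na_ne_bot_of_objective_ne_bot hbot hm₁.ne')
    (π.Na_ne_bot_of_objective_ne_bot hbot hm₂.ne') ht₀ ht₁
  set γ := t • γ₁ + (1 - t) • γ₂
  have hseg : γ ∈ openSegment ℝ γ₁ γ₂ := ⟨t, 1 - t, ht₀, by linarith, by ring, rfl⟩
  have hγ₁ : γ ≠ γ₁ := fun h => h₁₂ (left_mem_openSegment_iff.1 (h ▸ hseg))
  have hγ₂ : γ ≠ γ₂ := fun h => h₁₂ (right_mem_openSegment_iff.1 (h ▸ hseg))
  obtain ⟨π', hπ'⟩ := π.exists_objective_eq_sum_pooledWeight u E T h₁ h₂ h₁₂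
    ((convex_stdSimplex ℝ Ω).openSegment_subset hsimplex₁ hsimplex₂ hseg) hγ₁ hγ₂
    fun ω => by
      simp only [γ, Pi.add_apply, Pi.smul_apply, smul_eq_mul]
      linear_combination (γ₁ ω - γ₂ ω) * htm₁
  refine ⟨π', ?_⟩
  have hS : π.supp ⊆ insert γ π.supp := subset_insert γ π.supp
  rw [objective_eq_sum_of_subset π u E T hS, hπ',
    sum_sum_coe_mul_Na_eq_coe hE hT _ fun γ' _ b h => π.Na_ne_bot_of_objective_ne_bot hbot h,
    sum_sum_coe_mul_Na_eq_coe hE hT _ fun γ' _ b h => ?_,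
    sum_sum_pooledWeight_mul _ a γ₁ γ₂ γ (hS h₁) (hS h₂) (mem_insert_self γ π.supp),
    EReal.coe_lt_coe_iff, lt_add_iff_pos_right, sub_sub, sub_pos]
  · linear_combination mul_lt_mul_of_pos_left hconcave (add_pos hm₁ hm₂)
      + ((Na u E T a γ₂).toReal - (Na u E T a γ₁).toReal) * htm₁
  · by_cases hc : γ' = γ ∧ b = a
    · rwa [hc.1, hc.2]
    · exact π.Na_ne_bot_of_objective_ne_bot hbot
        (ne_zero_of_pooledWeight_ne_zero π.Q_mul_q_nonneg h₁₂ hγ₁ hγ₂ h hc)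

end Policy

namespace RIMax

variable {μ : Ω → ℝ} {u : A → Ω → ℝ} {E : A → EReal} {T : (Ω → ℝ) → EReal}
  {π : Policy Ω A μ}

theorem objective_ne_bot (hmax : RIMax u E T π) (hμ : μ ∈ stdSimplex ℝ Ω) {a₀ : A}
    (hE : E a₀ ≠ ⊤) (ha₀ : E a₀ ≠ ⊥) (hTμ : T μ = 0) : objective u E T π ≠ ⊥ := by
  intro hbot
  have h := hmax (Policy.noInformation hμ a₀)
  rw [hbot, le_bot_iff, Policy.objective_noInformation] at h
  exact (Na_ne_bot_iff hE hTμ.ge).2 ⟨ha₀, by simp [hTμ]⟩ h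

theorem eq_of_q_ne_zero (hmax : RIMax u E T π) (hE : ∀ b, E b ≠ ⊤) (hT : ∀ γ, 0 ≤ T γ)
    (hconv : StrictConvexOnSimplex T) (hbot : objective u E T π ≠ ⊥) {a : A}
    {γ₁ γ₂ : Ω → ℝ} (h₁ : γ₁ ∈ π.supp) (h₂ : γ₂ ∈ π.supp) (hq₁ : π.q γ₁ a ≠ 0)
    (hq₂ : π.q γ₂ a ≠ 0) : γ₁ = γ₂ := by
  by_contra h₁₂
  obtain ⟨π', hlt⟩ := π.exists_objective_gt_of_chosen_at_two hE hT hconv hbot h₁ h₂ h₁₂ hq₁ hq₂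
  exact (hmax π').not_gt hlt

end RIMax

/-- Corollary 2. Under Assumption 1, for fixed `(E, T)`, if
`(Q̂, q̂)` solves the rational-inattention problem and `a` is chosen with
probability 1 at the supported posterior `γ^a`, then `P(a) > 0` and the
optimal posterior is recovered by Bayes' rule:
`γ^a(ω) = P(a|ω) μ(ω) / P(a)` for every state `ω`. -/
theorem statement3 (μ : Ω → ℝ) (hμ : μ ∈ stdSimplex ℝ Ω) (hμpos : ∀ ω, 0 < μ ω)
    (u : A → Ω → ℝ) (E : A → EReal) (T : (Ω → ℝ) → EReal)
    (hA : Assumption1 μ u E T)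
    (πhat : Policy Ω A μ) (hmax : RIMax u E T πhat)
    (a : A) (γa : Ω → ℝ) (hγa : γa ∈ πhat.supp) (hq : πhat.q γa a = 1) :
    0 < genProb μ πhat a ∧
    ∀ ω, γa ω = genP μ πhat a ω * μ ω / genProb μ πhat a := by
  obtain ⟨hE, ⟨a₀, ha₀⟩, hT, hTμ, hconv, -, -⟩ := hA
  have hbot := hmax.objective_ne_bot hμ (hE a₀) ha₀ hTμ
  have hsum (g : (Ω → ℝ) → ℝ) :
      ∑ γ ∈ πhat.supp, πhat.Q γ * πhat.q γ a * g γ = πhat.Q γa * g γa := by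
    refine (sum_eq_single γa (fun γ hγ hne => ?_) (absurd hγa)).trans (by rw [hq, mul_one])
    by_contra h
    exact hne (hmax.eq_of_q_ne_zero hE hT hconv hbot hγ hγa
      (right_ne_zero_of_mul (left_ne_zero_of_mul h)) (by simp [hq]))
  have hprob : genProb μ πhat a = πhat.Q γa := by simpa [genProb] using hsum 1
  refine ⟨hprob ▸ πhat.Q_pos hγa, fun ω => ?_⟩
  rw [genP, hsum (· ω), hprob]
  field_simp [(hμpos ω).ne', (πhat.Q_pos hγa).ne']
end
end

section
/- (Aggregation, part ii) Suppose P* : S → 𝒫 is measurable, for ℙ-almost every s the point P*(s) maximizes P ↦ Σ_{ω,a} P(a|ω)μ(ω)v_{a,ω} + c(s,P) over 𝒫, the map s ↦ sup_{P∈𝒫}(Σ_{ω,a} P(a|ω)μ(ω)v_{a,ω} + c(s,P)) is measurable, and both ∫_S P* dℙ and ∫_S c(s,P*(s)) dℙ(s) exist and are finite. Define D̄(P) := sup{ ∫_S c(s,P'(s)) dℙ(s) : P' : S → 𝒫 measurable with ∫_S P' dℙ = P }. Then the representative-agent indirect utility equals the mean of the pointwise maximized value: sup_{P∈𝒫} [Σ_{ω,a}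 P(a|ω)μ(ω)v_{a,ω} + D̄(P)] = ∫_S sup_{P∈𝒫} [Σ_{ω,a} P(a|ω)μ(ω)v_{a,ω} + c(s,P)] dℙ(s). -/
/-!
Write `V s` for the maximized value at `s` and `P̄ ∈ 𝒫` for the mean of `Pstar`. Almost surely
`V s = linUtil μ v (Pstar s) + c s (Pstar s)`, so by linearity of `linUtil`,
`∫ V = linUtil μ v P̄ + ∫ c s (Pstar s) ≤ linUtil μ v P̄ + D̄(P̄)`, because `Pstar` is admissible for
`D̄(P̄)`. Conversely, for every `P` and every admissible `P'` with mean `P`,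
`linUtil μ v P + ∫ c s (P' s) = ∫ (linUtil μ v (P' s) + c s (P' s)) ≤ ∫ V`.
Both steps rest on additivity of the extended-real integral when one summand is real integrable
and the other only quasi-integrable.
-/

open scoped BigOperators ENNReal
open MeasureTheory

noncomputable section

/-- The set `𝒫` of state-dependent stochastic choice functions, viewed as the
subset of `ℝ^{A×Ω}` of points `P` with `P(·|ω) ∈ Δ(A)` for every state `ω`. -/
def SDSCset (A Ω : Type*) [Fintype A] [Fintype Ω] : Set (A × Ω → ℝ) :=
  {P | ∀ ω : Ω, (fun a : A => P (a, ω)) ∈ stdSimplex ℝ A}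

variable {A Ω : Type*} [Fintype A] [Fintype Ω]

/-- Linear part of the objective: `Σ_{ω,a} P(a|ω) μ(ω) v_{a,ω}`. -/
def linUtil (μ : Ω → ℝ) (v P : A × Ω → ℝ) : ℝ :=
  ∑ aw : A × Ω, P aw * μ aw.2 * v aw

/-- Positive part of an extended real, as an element of `[0,∞]`. -/
def epos (x : EReal) : ℝ≥0∞ := if x = ⊤ then ⊤ else ENNReal.ofReal x.toReal

/-- Integral of an `ℝ ∪ {−∞, +∞}`-valued function: the difference of the lower
integrals of its positive and negative parts. -/
def erealIntegral {S : Type*} [MeasurableSpace S] (ℙ : Measure S) (f : S → EReal) : EReal :=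
  ((∫⁻ s, epos (f s) ∂ℙ : ℝ≥0∞) : EReal) - ((∫⁻ s, epos (-(f s)) ∂ℙ : ℝ≥0∞) : EReal)

/-- The aggregate disturbance function
`D̄(P) = sup { ∫ c(s, P'(s)) dℙ(s) : P' measurable 𝒫-valued, ∫ P' dℙ = P }`. -/
def Dbar {S : Type*} [MeasurableSpace S] (ℙ : Measure S)
    (c : S → (A × Ω → ℝ) → EReal) (P : A × Ω → ℝ) : EReal :=
  sSup {I : EReal | ∃ P' : S → A × Ω → ℝ, Measurable P' ∧
    (∀ s, P' s ∈ SDSCset A Ω) ∧ (∀ aw, ∫ s, P' s aw ∂ℙ = P aw) ∧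
    I = erealIntegral ℙ (fun s => c s (P' s))}

lemma epos_eq_toENNReal : epos = EReal.toENNReal := rfl

lemma ENNReal.ofReal_add_add_ofReal_neg (a b : ℝ) :
    ENNReal.ofReal (a + b) + (ENNReal.ofReal (-a) + ENNReal.ofReal (-b)) =
      ENNReal.ofReal (-(a + b)) + (ENNReal.ofReal a + ENNReal.ofReal b) := by
  have hmax (x : ℝ) : ENNReal.ofReal x = ENNReal.ofReal (max x 0) := by
    rw [ENNReal.ofReal_max, ENNReal.ofReal_zero, max_zero]
  rw [hmax (a + b), hmax (-a), hmax (-b), hmax (-(a + b)), hmax a, hmax b,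
    ← ENNReal.ofReal_add (le_max_right _ _) (le_max_right _ _),
    ← ENNReal.ofReal_add (le_max_right _ _) (add_nonneg (le_max_right _ _) (le_max_right _ _)),
    ← ENNReal.ofReal_add (le_max_right _ _) (le_max_right _ _),
    ← ENNReal.ofReal_add (le_max_right _ _) (add_nonneg (le_max_right _ _) (le_max_right _ _))]
  congr 1
  rcases le_total 0 a with ha | ha <;> rcases le_total 0 b with hb | hb <;>
    rcases le_total 0 (a + b) with hab | hab <;>
    simp only [max_eq_left, max_eq_right, ha, hb, hab, neg_nonneg, neg_nonpos] <;> linarith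

lemma EReal.toENNReal_coe_add_add_toENNReal_neg (r : ℝ) (x : EReal) :
    ((r : EReal) + x).toENNReal + (ENNReal.ofReal (-r) + (-x).toENNReal) =
      (-((r : EReal) + x)).toENNReal + (ENNReal.ofReal r + x.toENNReal) := by
  induction x using EReal.rec with
  | bot => simp
  | top => simp
  | coe y =>
    simpa only [← EReal.coe_add, ← EReal.coe_neg, EReal.real_coe_toENNReal]
      using ENNReal.ofReal_add_add_ofReal_neg r y

lemma EReal.coe_ennreal_sub_eq_of_add_eq {Hp Hm Gp Gm Fp Fm : ℝ≥0∞} (hGp : Gp ≠ ⊤) (hGm : Gm ≠ ⊤)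
    (hF : Fm ≠ ⊤ ∨ Fp ≠ ⊤) (hHp : Hp ≤ Gp + Fp) (hHm : Hm ≤ Gm + Fm)
    (h : Hp + (Gm + Fm) = Hm + (Gp + Fp)) :
    (Hp : EReal) - Hm = ((Gp.toReal - Gm.toReal : ℝ) : EReal) + ((Fp : EReal) - Fm) := by
  by_cases hFp : Fp = ⊤
  · have hFm := hF.resolve_right (not_not.2 hFp)
    have hHm' : Hm ≠ ⊤ := ne_top_of_le_ne_top (ENNReal.add_ne_top.2 ⟨hGm, hFm⟩) hHm
    have hHp' : Hp = ⊤ := by simpa [hFp, hHm', hGm, hFm] using h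
    rw [hHp', hFp, ← EReal.coe_ennreal_toReal hHm', ← EReal.coe_ennreal_toReal hFm,
      EReal.coe_ennreal_top, EReal.top_sub_coe, EReal.top_sub_coe,
      EReal.coe_add_top]
  by_cases hFm : Fm = ⊤
  · have hHp' : Hp ≠ ⊤ := ne_top_of_le_ne_top (ENNReal.add_ne_top.2 ⟨hGp, hFp⟩) hHp
    have hHm' : Hm = ⊤ := by simpa [hFm, hHp', hGp, hFp] using h.symm
    simp [hHm', hFm, EReal.sub_top]
  have hHp' : Hp ≠ ⊤ := ne_top_of_le_ne_top (ENNReal.add_ne_top.2 ⟨hGp, hFp⟩) hHp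
  have hHm' : Hm ≠ ⊤ := ne_top_of_le_ne_top (ENNReal.add_ne_top.2 ⟨hGm, hFm⟩) hHm
  have hreal := congrArg ENNReal.toReal h
  rw [ENNReal.toReal_add hHp' (ENNReal.add_ne_top.2 ⟨hGm, hFm⟩), ENNReal.toReal_add hGm hFm,
    ENNReal.toReal_add hHm' (ENNReal.add_ne_top.2 ⟨hGp, hFp⟩), ENNReal.toReal_add hGp hFp] at hreal
  rw [← EReal.coe_ennreal_toReal hHp', ← EReal.coe_ennreal_toReal hHm',
    ← EReal.coe_ennreal_toReal hFp, ← EReal.coe_ennreal_toReal hFm, ← EReal.coe_sub,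
    ← EReal.coe_sub, ← EReal.coe_add, EReal.coe_eq_coe_iff]
  linarith

section ErealIntegral

variable {S : Type*} [MeasurableSpace S] {ℙ : Measure S}

lemma erealIntegral_mono_ae {f g : S → EReal} (h : f ≤ᵐ[ℙ] g) :
    erealIntegral ℙ f ≤ erealIntegral ℙ g := by
  refine EReal.sub_le_sub (EReal.coe_ennreal_le_coe_ennreal_iff.2 (lintegral_mono_ae ?_))
    (EReal.coe_ennreal_le_coe_ennreal_iff.2 (lintegral_mono_ae ?_))
  · filter_upwards [h] with s hs using EReal.toENNReal_le_toENNReal hs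
  · filter_upwards [h] with s hs using EReal.toENNReal_le_toENNReal (EReal.neg_le_neg_iff.2 hs)

lemma erealIntegral_congr_ae {f g : S → EReal} (h : f =ᵐ[ℙ] g) :
    erealIntegral ℙ f = erealIntegral ℙ g :=
  le_antisymm (erealIntegral_mono_ae h.le) (erealIntegral_mono_ae h.symm.le)

theorem erealIntegral_coe_add {g : S → ℝ} (hg : Integrable g ℙ) {f : S → EReal}
    (hf : AEMeasurable f ℙ) (hqi : ∫⁻ s, epos (-(f s)) ∂ℙ ≠ ⊤ ∨ ∫⁻ s, epos (f s) ∂ℙ ≠ ⊤) :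
    erealIntegral ℙ (fun s => (g s : EReal) + f s) =
      ((∫ s, g s ∂ℙ : ℝ) : EReal) + erealIntegral ℙ f := by
  simp only [erealIntegral, epos_eq_toENNReal] at hqi ⊢
  have hgp : AEMeasurable (fun s => ENNReal.ofReal (g s)) ℙ := hg.aemeasurable.ennreal_ofReal
  have hgm : AEMeasurable (fun s => ENNReal.ofReal (-g s)) ℙ := hg.aemeasurable.neg.ennreal_ofReal
  have hfp : AEMeasurable (fun s => (f s).toENNReal) ℙ := hf.ereal_toENNReal
  have hfm : AEMeasurable (fun s => (-f s).toENNReal) ℙ := hf.neg.ereal_toENNReal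
  have hparts := lintegral_congr (μ := ℙ) fun s =>
    EReal.toENNReal_coe_add_add_toENNReal_neg (g s) (f s)
  rw [lintegral_add_right' _ (show AEMeasurable (fun s => _ + _) ℙ from hgm.add hfm),
    lintegral_add_left' hgm,
    lintegral_add_right' _ (show AEMeasurable (fun s => _ + _) ℙ from hgp.add hfp),
    lintegral_add_left' hgp] at hparts
  have hpos_le : ∫⁻ s, ((g s : EReal) + f s).toENNReal ∂ℙ ≤
      ∫⁻ s, ENNReal.ofReal (g s) ∂ℙ + ∫⁻ s, (f s).toENNReal ∂ℙ := by
    rw [← lintegral_add_left' hgp]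
    exact lintegral_mono fun s => EReal.toENNReal_add_le
  have hneg_le : ∫⁻ s, (-((g s : EReal) + f s)).toENNReal ∂ℙ ≤
      ∫⁻ s, ENNReal.ofReal (-g s) ∂ℙ + ∫⁻ s, (-f s).toENNReal ∂ℙ := by
    rw [← lintegral_add_left' hgm]
    refine lintegral_mono fun s => ?_
    rw [EReal.neg_add (.inl (EReal.coe_ne_bot _)) (.inl (EReal.coe_ne_top _)), ← EReal.coe_neg,
      sub_eq_add_neg]
    exact EReal.toENNReal_add_le
  rw [integral_eq_lintegral_pos_part_sub_lintegral_neg_part hg]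
  exact EReal.coe_ennreal_sub_eq_of_add_eq hg.lintegral_lt_top.ne hg.neg.lintegral_lt_top.ne hqi
    hpos_le hneg_le hparts

end ErealIntegral

section ChoiceFunctions

variable {S : Type*} [MeasurableSpace S] {ℙ : Measure S}

lemma apply_mem_Icc_of_mem_SDSCset {P : A × Ω → ℝ} (hP : P ∈ SDSCset A Ω) (aw : A × Ω) :
    P aw ∈ Set.Icc 0 1 :=
  mem_Icc_of_mem_stdSimplex (hP aw.2) aw.1

lemma integrable_apply_of_mem_SDSCset [IsFiniteMeasure ℙ] {P' : S → A × Ω → ℝ}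
    (hP' : Measurable P') (hmem : ∀ s, P' s ∈ SDSCset A Ω) (aw : A × Ω) :
    Integrable (fun s => P' s aw) ℙ := by
  refine Integrable.of_bound ((measurable_pi_apply aw).comp hP').aestronglyMeasurable 1
    (ae_of_all _ fun s => ?_)
  obtain ⟨h0, h1⟩ := apply_mem_Icc_of_mem_SDSCset (hmem s) aw
  rwa [Real.norm_of_nonneg h0]

lemma integral_mem_SDSCset [IsProbabilityMeasure ℙ] {P' : S → A × Ω → ℝ} (hP' : Measurable P')
    (hmem : ∀ s, P' s ∈ SDSCset A Ω) : (fun aw => ∫ s, P' s aw ∂ℙ) ∈ SDSCset A Ω := by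
  refine fun ω =>
    ⟨fun a => integral_nonneg fun s => (apply_mem_Icc_of_mem_SDSCset (hmem s) _).1, ?_⟩
  rw [← integral_finsetSum _ fun a _ => integrable_apply_of_mem_SDSCset hP' hmem (a, ω)]
  simp [fun s => (hmem s ω).2]

lemma integrable_linUtil_comp (μ : Ω → ℝ) (v : A × Ω → ℝ) {P' : S → A × Ω → ℝ}
    (hP' : ∀ aw, Integrable (fun s => P' s aw) ℙ) :
    Integrable (fun s => linUtil μ v (P' s)) ℙ :=
  integrable_finsetSum _ fun aw _ => ((hP' aw).mul_const _).mul_const _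

lemma integral_linUtil_comp (μ : Ω → ℝ) (v : A × Ω → ℝ) {P' : S → A × Ω → ℝ}
    (hP' : ∀ aw, Integrable (fun s => P' s aw) ℙ) :
    ∫ s, linUtil μ v (P' s) ∂ℙ = linUtil μ v (fun aw => ∫ s, P' s aw ∂ℙ) := by
  simp only [linUtil]
  rw [integral_finsetSum _ fun aw _ => ((hP' aw).mul_const _).mul_const _]
  simp only [integral_mul_const]

end ChoiceFunctions

section Aggregation

variable {S : Type*} [MeasurableSpace S] (ℙ : Measure S) (μ : Ω → ℝ) (v : A × Ω → ℝ)
  (c : S → (A × Ω → ℝ) → EReal)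

lemma erealIntegral_linUtil_add {P' : S → A × Ω → ℝ} (hP' : ∀ aw, Integrable (fun s => P' s aw) ℙ)
    (hcm : AEMeasurable (fun s => c s (P' s)) ℙ)
    (hqi : ∫⁻ s, epos (-(c s (P' s))) ∂ℙ ≠ ⊤ ∨ ∫⁻ s, epos (c s (P' s)) ∂ℙ ≠ ⊤) :
    erealIntegral ℙ (fun s => ((linUtil μ v (P' s) : ℝ) : EReal) + c s (P' s)) =
      ((linUtil μ v (fun aw => ∫ s, P' s aw ∂ℙ) : ℝ) : EReal) +
        erealIntegral ℙ (fun s => c s (P' s)) := by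
  rw [erealIntegral_coe_add (integrable_linUtil_comp μ v hP') hcm hqi,
    integral_linUtil_comp μ v hP']

lemma linUtil_add_Dbar_le [IsFiniteMeasure ℙ]
    (hc : ∀ P' : S → A × Ω → ℝ, Measurable P' → (∀ s, P' s ∈ SDSCset A Ω) →
      Measurable (fun s => c s (P' s)) ∧
      ((∫⁻ s, epos (-(c s (P' s))) ∂ℙ ≠ ⊤) ∨ (∫⁻ s, epos (c s (P' s)) ∂ℙ ≠ ⊤)))
    (P : A × Ω → ℝ) :
    ((linUtil μ v P : ℝ) : EReal) + Dbar ℙ c P ≤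
      erealIntegral ℙ (fun s => ⨆ Q ∈ SDSCset A Ω, (((linUtil μ v Q : ℝ) : EReal) + c s Q)) := by
  rw [add_comm, ← EReal.le_sub_iff_add_le (.inl (EReal.coe_ne_bot _)) (.inl (EReal.coe_ne_top _))]
  refine sSup_le ?_
  rintro _ ⟨P', hP', hmem, hmean, rfl⟩
  rw [EReal.le_sub_iff_add_le (.inl (EReal.coe_ne_bot _)) (.inl (EReal.coe_ne_top _)), add_comm]
  obtain ⟨hcm, hqi⟩ := hc P' hP' hmem
  calc ((linUtil μ v P : ℝ) : EReal) + erealIntegral ℙ (fun s => c s (P' s))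
      = erealIntegral ℙ (fun s => ((linUtil μ v (P' s) : ℝ) : EReal) + c s (P' s)) := by
        rw [erealIntegral_linUtil_add ℙ μ v c (integrable_apply_of_mem_SDSCset hP' hmem)
          hcm.aemeasurable hqi, funext hmean]
    _ ≤ _ := erealIntegral_mono_ae (ae_of_all _ fun s => le_iSup₂_of_le (P' s) (hmem s) le_rfl)

end Aggregation

theorem statement10_general {S : Type*} [MeasurableSpace S] (ℙ : Measure S)
    [IsProbabilityMeasure ℙ]
    (μ : Ω → ℝ)
    (v : A × Ω → ℝ) (c : S → (A × Ω → ℝ) → EReal)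
    (hc : ∀ P' : S → A × Ω → ℝ, Measurable P' → (∀ s, P' s ∈ SDSCset A Ω) →
      Measurable (fun s => c s (P' s)) ∧
      ((∫⁻ s, epos (-(c s (P' s))) ∂ℙ ≠ ⊤) ∨ (∫⁻ s, epos (c s (P' s)) ∂ℙ ≠ ⊤)))
    (Pstar : S → A × Ω → ℝ) (hPmeas : Measurable Pstar)
    (hPmem : ∀ s, Pstar s ∈ SDSCset A Ω)
    (hopt : ∀ᵐ s ∂ℙ, ∀ P ∈ SDSCset A Ω,
      ((linUtil μ v P : ℝ) : EReal) + c s P ≤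
      ((linUtil μ v (Pstar s) : ℝ) : EReal) + c s (Pstar s)) :
    (⨆ P ∈ SDSCset A Ω, (((linUtil μ v P : ℝ) : EReal) + Dbar ℙ c P)) =
      erealIntegral ℙ (fun s =>
        ⨆ P ∈ SDSCset A Ω, (((linUtil μ v P : ℝ) : EReal) + c s P)) := by
  have hV : (fun s => ⨆ P ∈ SDSCset A Ω, (((linUtil μ v P : ℝ) : EReal) + c s P)) =ᵐ[ℙ]
      fun s => ((linUtil μ v (Pstar s) : ℝ) : EReal) + c s (Pstar s) :=
    hopt.mono fun s hs => le_antisymm (iSup₂_le hs) (le_iSup₂_of_le _ (hPmem s) le_rfl)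
  obtain ⟨hcm, hqi⟩ := hc Pstar hPmeas hPmem
  refine le_antisymm (iSup₂_le fun P _ => linUtil_add_Dbar_le ℙ μ v c hc P) ?_
  calc erealIntegral ℙ (fun s => ⨆ P ∈ SDSCset A Ω, (((linUtil μ v P : ℝ) : EReal) + c s P))
      = ((linUtil μ v (fun aw => ∫ s, Pstar s aw ∂ℙ) : ℝ) : EReal) +
          erealIntegral ℙ (fun s => c s (Pstar s)) := by
        rw [erealIntegral_congr_ae hV, erealIntegral_linUtil_add ℙ μ v c
          (integrable_apply_of_mem_SDSCset hPmeas hPmem) hcm.aemeasurable hqi]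
    _ ≤ ((linUtil μ v (fun aw => ∫ s, Pstar s aw ∂ℙ) : ℝ) : EReal) +
          Dbar ℙ c (fun aw => ∫ s, Pstar s aw ∂ℙ) := by
        gcongr; exact le_sSup ⟨Pstar, hPmeas, hPmem, fun _ => rfl, rfl⟩
    _ ≤ _ := le_iSup₂_of_le _ (integral_mem_SDSCset hPmeas hPmem) le_rfl

/-- Aggregation, part ii; Theorem 1(ii) in Allen–Rehbeck
2019. Under the hypotheses of the aggregation theorem, the representative
agent's indirect utility equals the mean of the pointwise maximized value:
`sup_{P∈𝒫} [Σ P(a|ω)μ(ω)v_{a,ω} + D̄(P)] = ∫ sup_{P∈𝒫} [Σ P(a|ω)μ(ω)v_{a,ω} + c(s,P)] dℙ(s)`. -/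
theorem statement10 {S : Type*} [MeasurableSpace S] (ℙ : Measure S)
    [IsProbabilityMeasure ℙ]
    (μ : Ω → ℝ) (hμ : μ ∈ stdSimplex ℝ Ω) (hμpos : ∀ ω, 0 < μ ω)
    (v : A × Ω → ℝ) (c : S → (A × Ω → ℝ) → EReal)
    (hc : ∀ P' : S → A × Ω → ℝ, Measurable P' → (∀ s, P' s ∈ SDSCset A Ω) →
      Measurable (fun s => c s (P' s)) ∧
      ((∫⁻ s, epos (-(c s (P' s))) ∂ℙ ≠ ⊤) ∨ (∫⁻ s, epos (c s (P' s)) ∂ℙ ≠ ⊤)))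
    (Pstar : S → A × Ω → ℝ) (hPmeas : Measurable Pstar)
    (hPmem : ∀ s, Pstar s ∈ SDSCset A Ω)
    (hopt : ∀ᵐ s ∂ℙ, ∀ P ∈ SDSCset A Ω,
      ((linUtil μ v P : ℝ) : EReal) + c s P ≤
      ((linUtil μ v (Pstar s) : ℝ) : EReal) + c s (Pstar s))
    (hsupmeas : Measurable (fun s =>
      ⨆ P ∈ SDSCset A Ω, (((linUtil μ v P : ℝ) : EReal) + c s P)))
    (hPint : ∀ aw : A × Ω, Integrable (fun s => Pstar s aw) ℙ)
    (hcfin : (∫⁻ s, epos (c s (Pstar s)) ∂ℙ ≠ ⊤) ∧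
      (∫⁻ s, epos (-(c s (Pstar s))) ∂ℙ ≠ ⊤)) :
    (⨆ P ∈ SDSCset A Ω, (((linUtil μ v P : ℝ) : EReal) + Dbar ℙ c P)) =
      erealIntegral ℙ (fun s =>
        ⨆ P ∈ SDSCset A Ω, (((linUtil μ v P : ℝ) : EReal) + c s P)) :=
  statement10_general ℙ μ v c hc Pstar hPmeas hPmem hopt
end
end

section
/- (Identification of changes in mean indirect utility) Let D̄ : 𝒫 → ℝ ∪ {−∞} be concave, upper semicontinuous, and finite at some point, and suppose V(v) := sup_{P∈𝒫} Σ_{ω,a} P(a|ω)μ(ω)v_{a,ω} + D̄(P) is finite for every v ∈ ℝ^{A×Ω}. Fix v, v' ∈ ℝ^{A×Ω} and for t ∈ [0,1] set v_t := t v' + (1−t) v. If for each t ∈ [0,1] the supremum defining V(v_t) is attained at a unique P_t ∈ 𝒫, then V(v') − V(v) = ∫_0^1 Σ_{ω,a} P_t(a|ω) μ(ω) (v'_{a,ω} − v_{a,ω}) dt. -/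
open scoped BigOperators

noncomputable section

variable {A Ω : Type*} [Fintype A] [Fintype Ω]

/-- Concavity on `𝒫` of an `ℝ ∪ {−∞}`-valued aggregate disturbance. -/
def ConcaveOnP (D : (A × Ω → ℝ) → EReal) : Prop :=
  ∀ P₁ ∈ SDSCset A Ω, ∀ P₂ ∈ SDSCset A Ω, ∀ t : ℝ, 0 ≤ t → t ≤ 1 →
    (t : EReal) * D P₁ + ((1 - t : ℝ) : EReal) * D P₂ ≤ D (t • P₁ + (1 - t) • P₂)

/-- Indirect utility of the representative agent,
`V(v) = sup_{P ∈ 𝒫} Σ_{ω,a} P(a|ω) μ(ω) v_{a,ω} + D̄(P)`, as a real number. -/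
def Vfun (μ : Ω → ℝ) (D : (A × Ω → ℝ) → EReal) (v : A × Ω → ℝ) : ℝ :=
  sSup {x : ℝ | ∃ P ∈ SDSCset A Ω, ((linUtil μ v P : ℝ) : EReal) + D P = (x : EReal)}

/-- Extended-real-valued indirect utility
`V(v) = sup_{P ∈ 𝒫} Σ_{ω,a} P(a|ω) μ(ω) v_{a,ω} + D̄(P)`. -/
def VE (μ : Ω → ℝ) (D : (A × Ω → ℝ) → EReal) (v : A × Ω → ℝ) : EReal :=
  ⨆ P ∈ SDSCset A Ω, (((linUtil μ v P : ℝ) : EReal) + D P)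

/-! The indirect utility `V` is a supremum of affine functions of `v`, and a maximizer `P` at `w`
is a subgradient there: `V w' ≥ V w + ⟨P, w' - w⟩_μ`. Hence `φ t := V v_t` satisfies
`φ s + (t - s) L s ≤ φ t` with `L t := ⟨P_t, v' - v⟩_μ`. This makes `L` monotone and gives
`|φ t - φ s - ∫_s^t L| ≤ (t - s) (L t - L s)`; telescoping over the partition of `[0, 1]` into
`n` equal pieces bounds `|φ 1 - φ 0 - ∫_0^1 L|` by `(L 1 - L 0) / n`. -/

theorem eq_of_abs_sub_le_mul_sub {g h : ℝ → ℝ} {a b : ℝ} (hab : a ≤ b)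
    (hg : ∀ s ∈ Set.Icc a b, ∀ t ∈ Set.Icc a b, s ≤ t → |g t - g s| ≤ (t - s) * (h t - h s)) :
    g b = g a := by
  set x : ℕ → ℕ → ℝ := fun n i => a + i * ((b - a) / n)
  have hx_mem : ∀ n i, 0 < n → i ≤ n → x n i ∈ Set.Icc a b := by
    intro n i hn hi
    have hn' : (0 : ℝ) < n := by exact_mod_cast hn
    have hi' : (i : ℝ) ≤ n := by exact_mod_cast hi
    refine ⟨le_add_of_nonneg_right (by positivity), ?_⟩
    calc a + i * ((b - a) / n) ≤ a + n * ((b - a) / n) := by gcongr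
      _ = b := by field_simp; ring
  have partial_bound : ∀ n, 0 < n → ∀ k ≤ n,
      |g (x n k) - g a| ≤ (b - a) / n * (h (x n k) - h a) := by
    intro n hn k
    induction k with
    | zero => simp [x]
    | succ k ih =>
      intro hk
      have hxk : x n (k + 1) - x n k = (b - a) / n := by simp only [x]; push_cast; ring
      have step := hg _ (hx_mem n k hn (by omega)) _ (hx_mem n (k + 1) hn hk)
        (by linarith [div_nonneg (sub_nonneg.2 hab) (Nat.cast_nonneg (α := ℝ) n)])
      rw [hxk] at step
      calc |g (x n (k + 1)) - g a| ≤ |g (x n (k + 1)) - g (x n k)| + |g (x n k) - g a| :=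
            abs_sub_le _ _ _
        _ ≤ _ := by have := ih (by omega); nlinarith
  have bound : ∀ n : ℕ, 0 < n → |g b - g a| ≤ (b - a) * (h b - h a) / n := by
    intro n hn
    have hxn : x n n = b := by simp only [x]; field_simp; ring
    have := partial_bound n hn n le_rfl
    rw [hxn] at this
    exact this.trans_eq (by ring)
  have : |g b - g a| ≤ 0 :=
    ge_of_tendsto (tendsto_const_div_atTop_nhds_zero_nat _)
      (Filter.eventually_atTop.2 ⟨1, fun n hn => bound n hn⟩)
  exact sub_eq_zero.1 (abs_nonpos_iff.1 this)

theorem monotoneOn_of_subgradient {φ L : ℝ → ℝ} {S : Set ℝ}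
    (h : ∀ s ∈ S, ∀ t ∈ S, φ s + (t - s) * L s ≤ φ t) : MonotoneOn L S := by
  intro s hs t ht hst
  rcases hst.eq_or_lt with rfl | hlt
  · exact le_rfl
  · have h₁ := h s hs t ht
    have h₂ := h t ht s hs
    exact le_of_mul_le_mul_left (by nlinarith) (sub_pos.2 hlt)

theorem sub_eq_integral_of_subgradient {φ L : ℝ → ℝ} {a b : ℝ} (hab : a ≤ b)
    (h : ∀ s ∈ Set.Icc a b, ∀ t ∈ Set.Icc a b, φ s + (t - s) * L s ≤ φ t) :
    φ b - φ a = ∫ t in a..b, L t := by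
  have hL := monotoneOn_of_subgradient h
  have hint : ∀ s ∈ Set.Icc a b, ∀ t ∈ Set.Icc a b, IntervalIntegrable L MeasureTheory.volume s t :=
    fun s hs t ht => (hL.mono (Set.uIcc_subset_Icc hs ht)).intervalIntegrable
  -- on `[s, t]` both `φ t - φ s` and `∫ L` lie between `(t - s) L s` and `(t - s) L t`
  have key : ∀ s ∈ Set.Icc a b, ∀ t ∈ Set.Icc a b, s ≤ t →
      |(φ t - ∫ u in a..t, L u) - (φ s - ∫ u in a..s, L u)| ≤ (t - s) * (L t - L s) := by
    intro s hs t ht hst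
    have hsub : Set.Icc s t ⊆ Set.Icc a b := Set.Icc_subset_Icc hs.1 ht.2
    have lower : (t - s) * L s ≤ ∫ u in s..t, L u := by
      simpa using intervalIntegral.integral_mono_on hst intervalIntegrable_const (hint s hs t ht)
        fun u hu => hL hs (hsub hu) hu.1
    have upper : ∫ u in s..t, L u ≤ (t - s) * L t := by
      simpa using intervalIntegral.integral_mono_on hst (hint s hs t ht) intervalIntegrable_const
        fun u hu => hL (hsub hu) ht hu.2
    rw [← intervalIntegral.integral_add_adjacent_intervals (hint a ⟨le_rfl, hab⟩ s hs)
      (hint s hs t ht), abs_le]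
    have h₁ := h s hs t ht
    have h₂ := h t ht s hs
    constructor <;> nlinarith
  have := eq_of_abs_sub_le_mul_sub hab key
  simp only [intervalIntegral.integral_same, sub_zero] at this
  linarith

theorem linUtil_sub (μ : Ω → ℝ) (w w' P : A × Ω → ℝ) :
    linUtil μ (w' - w) P = linUtil μ w' P - linUtil μ w P := by
  simp only [linUtil, Pi.sub_apply, mul_sub, Finset.sum_sub_distrib]

theorem linUtil_smul (μ : Ω → ℝ) (c : ℝ) (w P : A × Ω → ℝ) :
    linUtil μ (c • w) P = c * linUtil μ w P := by
  simp only [linUtil, Pi.smul_apply, smul_eq_mul, Finset.mul_sum]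
  exact Finset.sum_congr rfl fun _ _ => by ring

theorem le_VE (μ : Ω → ℝ) (D : (A × Ω → ℝ) → EReal) (w : A × Ω → ℝ) {P : A × Ω → ℝ}
    (hP : P ∈ SDSCset A Ω) : ((linUtil μ w P : ℝ) : EReal) + D P ≤ VE μ D w :=
  le_iSup₂ (f := fun P (_ : P ∈ SDSCset A Ω) => ((linUtil μ w P : ℝ) : EReal) + D P) P hP

theorem VE_eq_of_forall_le (μ : Ω → ℝ) (D : (A × Ω → ℝ) → EReal) (w : A × Ω → ℝ)
    {P : A × Ω → ℝ} (hP : P ∈ SDSCset A Ω)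
    (hmax : ∀ Q ∈ SDSCset A Ω,
      ((linUtil μ w Q : ℝ) : EReal) + D Q ≤ ((linUtil μ w P : ℝ) : EReal) + D P) :
    VE μ D w = ((linUtil μ w P : ℝ) : EReal) + D P :=
  le_antisymm (iSup₂_le hmax) (le_VE μ D w hP)

theorem EReal.eq_coe_sub_of_coe_add_eq_coe {x z : ℝ} {y : EReal} (h : (x : EReal) + y = z) :
    y = ((z - x : ℝ) : EReal) := by
  induction y using EReal.rec with
  | bot => simp at h
  | top => simp at h
  | coe y => rw [← EReal.coe_add, EReal.coe_eq_coe_iff] at h; rw [← h]; ring_nf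

-- A maximizer at `w` is a subgradient of the (convex) indirect utility at `w`.
theorem VE_toReal_add_linUtil_le (μ : Ω → ℝ) (D : (A × Ω → ℝ) → EReal) {w w' P : A × Ω → ℝ}
    (hw : VE μ D w ≠ ⊥ ∧ VE μ D w ≠ ⊤) (hw' : VE μ D w' ≠ ⊤) (hP : P ∈ SDSCset A Ω)
    (hmax : ∀ Q ∈ SDSCset A Ω,
      ((linUtil μ w Q : ℝ) : EReal) + D Q ≤ ((linUtil μ w P : ℝ) : EReal) + D P) :
    (VE μ D w).toReal + linUtil μ (w' - w) P ≤ (VE μ D w').toReal := by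
  have hDP : D P = (((VE μ D w).toReal - linUtil μ w P : ℝ) : EReal) :=
    EReal.eq_coe_sub_of_coe_add_eq_coe <| by
      rw [← VE_eq_of_forall_le μ D w hP hmax, EReal.coe_toReal hw.2 hw.1]
  have hle := le_VE μ D w' hP
  rw [hDP, ← EReal.coe_add] at hle
  have := EReal.toReal_le_toReal hle (EReal.coe_ne_bot _) hw'
  rw [EReal.toReal_coe] at this
  rw [linUtil_sub]
  linarith

theorem statement15_general
    (μ : Ω → ℝ)
    (D : (A × Ω → ℝ) → EReal)
    (hVfin : ∀ w : A × Ω → ℝ, VE μ D w ≠ ⊥ ∧ VE μ D w ≠ ⊤)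
    (v v' : A × Ω → ℝ) (Pt : ℝ → A × Ω → ℝ)
    (hPt : ∀ t ∈ Set.Icc (0 : ℝ) 1,
      Pt t ∈ SDSCset A Ω ∧
      (∀ P ∈ SDSCset A Ω,
        ((linUtil μ (t • v' + (1 - t) • v) P : ℝ) : EReal) + D P ≤
        ((linUtil μ (t • v' + (1 - t) • v) (Pt t) : ℝ) : EReal) + D (Pt t)) ∧
      (∀ P ∈ SDSCset A Ω,
        ((linUtil μ (t • v' + (1 - t) • v) P : ℝ) : EReal) + D P =
          ((linUtil μ (t • v' + (1 - t) • v) (Pt t) : ℝ) : EReal) + D (Pt t) →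
        P = Pt t)) :
    VE μ D v' - VE μ D v =
      ((∫ t in (0 : ℝ)..1,
        ∑ aw : A × Ω, Pt t aw * μ aw.2 * (v' aw - v aw) : ℝ) : EReal) := by
  set φ : ℝ → ℝ := fun t => (VE μ D (t • v' + (1 - t) • v)).toReal
  have subgradient : ∀ s ∈ Set.Icc (0 : ℝ) 1, ∀ t ∈ Set.Icc (0 : ℝ) 1,
      φ s + (t - s) * linUtil μ (v' - v) (Pt s) ≤ φ t := by
    intro s hs t _
    have hseg : (t • v' + (1 - t) • v) - (s • v' + (1 - s) • v) = (t - s) • (v' - v) := by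
      module
    have := VE_toReal_add_linUtil_le μ D (w' := t • v' + (1 - t) • v) (hVfin _) (hVfin _).2
      (hPt s hs).1 (hPt s hs).2.1
    rwa [hseg, linUtil_smul] at this
  have hφ : ∀ t, VE μ D (t • v' + (1 - t) • v) = φ t :=
    fun t => (EReal.coe_toReal (hVfin _).2 (hVfin _).1).symm
  have h1 := hφ 1
  have h0 := hφ 0
  simp only [one_smul, sub_self, zero_smul, add_zero, sub_zero, zero_add] at h1 h0
  rw [h1, h0, ← EReal.coe_sub, sub_eq_integral_of_subgradient zero_le_one subgradient]
  rfl

/-- Identification of welfare changes; Theorem 4 in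
Allen–Rehbeck 2019. If `D̄` is concave, usc, `ℝ ∪ {−∞}`-valued and finite
somewhere, `V` is finite everywhere, and along the segment
`v_t = t v' + (1−t) v` the supremum defining `V(v_t)` is attained at a unique
`P_t ∈ 𝒫`, then
`V(v') − V(v) = ∫_0^1 Σ_{ω,a} P_t(a|ω) μ(ω)(v'_{a,ω} − v_{a,ω}) dt`. -/
theorem statement15
    (μ : Ω → ℝ) (hμ : μ ∈ stdSimplex ℝ Ω) (hμpos : ∀ ω, 0 < μ ω)
    (D : (A × Ω → ℝ) → EReal)
    (hDtop : ∀ P, D P ≠ ⊤) (hDconc : ConcaveOnP D)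
    (hDusc : UpperSemicontinuousOn D (SDSCset A Ω))
    (hDfin : ∃ P ∈ SDSCset A Ω, D P ≠ ⊥)
    (hVfin : ∀ w : A × Ω → ℝ, VE μ D w ≠ ⊥ ∧ VE μ D w ≠ ⊤)
    (v v' : A × Ω → ℝ) (Pt : ℝ → A × Ω → ℝ)
    (hPt : ∀ t ∈ Set.Icc (0 : ℝ) 1,
      Pt t ∈ SDSCset A Ω ∧
      (∀ P ∈ SDSCset A Ω,
        ((linUtil μ (t • v' + (1 - t) • v) P : ℝ) : EReal) + D P ≤
        ((linUtil μ (t • v' + (1 - t) • v) (Pt t) : ℝ) : EReal) + D (Pt t)) ∧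
      (∀ P ∈ SDSCset A Ω,
        ((linUtil μ (t • v' + (1 - t) • v) P : ℝ) : EReal) + D P =
          ((linUtil μ (t • v' + (1 - t) • v) (Pt t) : ℝ) : EReal) + D (Pt t) →
        P = Pt t)) :
    VE μ D v' - VE μ D v =
      ((∫ t in (0 : ℝ)..1,
        ∑ aw : A × Ω, Pt t aw * μ aw.2 * (v' aw - v aw) : ℝ) : EReal) :=
  statement15_general μ D hVfin v v' Pt hPt
end
end

section
/- (Counterfactual bounds) Let D̄ : 𝒫 → ℝ ∪ {−∞} be a function finite at some point of 𝒫. Let S ≥ 2 be an integer and v^0, v^1, …, v^{S−1} ∈ ℝ^{A×Ω}, and suppose for each s = 0,…,S−1 there is P^s ∈ 𝒫 maximizing P ↦ Σ_{ω,a} P(a|ω)μ(ω)v^s_{a,ω} + D̄(P) over 𝒫, with D̄(P^s) finite. Writing ⟨v, P⟩ := Σ_{ω,a} P(a|ω)μ(ω)v_{a,ω}, the following inequality holds: ⟨v^0 − v^{S−1}, P^0⟩ ≥ ⟨v^0, P^1⟩ − ⟨v^{S−1}, P^{S−1}⟩ − Σ_{s=1}^{S−2} ⟨v^s, P^s − P^{s+1}⟩.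 -/
open scoped BigOperators

noncomputable section

variable {A Ω : Type*} [Fintype A] [Fintype Ω]

/-- Counterfactual bounds; Theorem 5 in Allen–Rehbeck 2019.
If for each `s = 0, …, S−1` the point `P^s ∈ 𝒫` maximizes
`P ↦ ⟨v^s, P⟩ + D̄(P)` over `𝒫` with `D̄(P^s)` finite, then
`⟨v^0 − v^{S−1}, P^0⟩ ≥ ⟨v^0, P^1⟩ − ⟨v^{S−1}, P^{S−1}⟩ − Σ_{s=1}^{S−2} ⟨v^s, P^s − P^{s+1}⟩`,
where `⟨v, P⟩ = Σ_{ω,a} P(a|ω) μ(ω) v_{a,ω}`. -/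
theorem statement16
    (μ : Ω → ℝ) (hμ : μ ∈ stdSimplex ℝ Ω) (hμpos : ∀ ω, 0 < μ ω)
    (D : (A × Ω → ℝ) → EReal)
    (hDtop : ∀ P, D P ≠ ⊤) (hDfin : ∃ P ∈ SDSCset A Ω, D P ≠ ⊥)
    (S : ℕ) (hS : 2 ≤ S) (v P : ℕ → A × Ω → ℝ)
    (hP : ∀ s < S, P s ∈ SDSCset A Ω ∧ D (P s) ≠ ⊥ ∧
      ∀ P' ∈ SDSCset A Ω,
        ((linUtil μ (v s) P' : ℝ) : EReal) + D P' ≤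
        ((linUtil μ (v s) (P s) : ℝ) : EReal) + D (P s)) :
    linUtil μ (fun aw => v 0 aw - v (S - 1) aw) (P 0) ≥
      linUtil μ (v 0) (P 1) - linUtil μ (v (S - 1)) (P (S - 1)) -
      ∑ s ∈ Finset.Icc 1 (S - 2),
        linUtil μ (v s) (fun aw => P s aw - P (s + 1) aw) := by

  have key : ∀ s, s < S → ∀ t, t < S →
      linUtil μ (v s) (P t) + (D (P t)).toReal ≤
      linUtil μ (v s) (P s) + (D (P s)).toReal := by
    intro s hs t ht
    obtain ⟨hPs, hbs, hmax⟩ := hP s hs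
    obtain ⟨hPt, hbt, -⟩ := hP t ht
    have h := hmax (P t) hPt
    rw [show D (P s) = ((D (P s)).toReal : EReal) from
        (EReal.coe_toReal (hDtop _) hbs).symm,
      show D (P t) = ((D (P t)).toReal : EReal) from
        (EReal.coe_toReal (hDtop _) hbt).symm,
      ← EReal.coe_add, ← EReal.coe_add, EReal.coe_le_coe_iff] at h
    exact h
  set d : ℕ → ℝ := fun s => (D (P s)).toReal with hd
  have h0 := key 0 (by omega) 1 (by omega)
  have h1 := key (S - 1) (by omega) 0 (by omega)
  have hlin1 : linUtil μ (fun aw => v 0 aw - v (S - 1) aw) (P 0) =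
      linUtil μ (v 0) (P 0) - linUtil μ (v (S - 1)) (P 0) := by
    simp [linUtil, mul_sub, Finset.sum_sub_distrib]
  have hlin2 : ∀ s, linUtil μ (v s) (fun aw => P s aw - P (s + 1) aw) =
      linUtil μ (v s) (P s) - linUtil μ (v s) (P (s + 1)) := by
    intro s
    simp [linUtil, sub_mul, Finset.sum_sub_distrib]
  have hsum : d (S - 1) - d 1 ≤
      ∑ s ∈ Finset.Icc 1 (S - 2),
        (linUtil μ (v s) (P s) - linUtil μ (v s) (P (s + 1))) := by
    have hrw : ∑ s ∈ Finset.Icc 1 (S - 2),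
        (linUtil μ (v s) (P s) - linUtil μ (v s) (P (s + 1))) =
        ∑ i ∈ Finset.range (S - 2),
          (linUtil μ (v (i + 1)) (P (i + 1)) - linUtil μ (v (i + 1)) (P (i + 2))) := by
      rw [← Finset.Ico_add_one_right_eq_Icc, Finset.sum_Ico_eq_sum_range]
      refine Finset.sum_congr rfl fun i _ => ?_
      rw [Nat.add_comm 1 i]
    rw [hrw]
    have hterm : ∀ i ∈ Finset.range (S - 2),
        d (i + 2) - d (i + 1) ≤
        linUtil μ (v (i + 1)) (P (i + 1)) - linUtil μ (v (i + 1)) (P (i + 2)) := by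
      intro i hi
      rw [Finset.mem_range] at hi
      have := key (i + 1) (by omega) (i + 2) (by omega)
      simp only [hd]
      linarith
    calc d (S - 1) - d 1
        = ∑ i ∈ Finset.range (S - 2), (d (i + 2) - d (i + 1)) := by
          rw [Finset.sum_range_sub (fun j => d (j + 1))]
          congr 2
          omega
      _ ≤ _ := Finset.sum_le_sum hterm
  rw [ge_iff_le, hlin1]
  simp only [hlin2]
  simp only [hd] at *
  linarith
end
end
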